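/- Let J := K₁(1,0,0) and let C := K₁(a,b,c) be a matrix of the first kind with a² + b² + c² = 1 and a ≠ 1 and a ≠ -1. Suppose A = ρ(!![z₁, z₂; z₃, z₄]) for complex numbers z₁, z₂, z₃, z₄ (so that A*J = J*A automatically). Then A*C = C*A if and only if conj z₂ = -z₃ and conj z₁ = z₄. -/

import Mathlib

/-!
`ρ M` is the complex-linear map `v ↦ M v` of `ℂ²`, `J₀ = ρ (-i)` is complex-linear and central, and
`K₁ a b c = a • J₀ + K` where `K` is the conjugate-linear map `v ↦ W conj v` with
`W = !![0, w; -w, 0]`, `w = b + ic`. Hence `ρ M` commutes with `K₁ a b c` iff `M W = W conj M`,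
and since `w ≠ 0` exactly when `a ≠ ±1`, this reads `conj z₂ = -z₃` and `conj z₁ = z₄`.
-/

open Matrix

/-- A matrix of the first kind. -/
def K₁ (a b c : ℝ) : Matrix (Fin 4) (Fin 4) ℝ :=
  !![0,  a,  b,  c;
     -a, 0,  c,  -b;
     -b, -c, 0,  a;
     -c, b,  -a, 0]

/-- The particular matrix `J₀` of the first kind. -/
def J₀ : Matrix (Fin 4) (Fin 4) ℝ := K₁ 1 0 0

/-- The real form of a `2×2` complex matrix: each entry `x + iy` is replaced by the
`2×2` real block `!![x, -y; y, x]`. -/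
def ρ (M : Matrix (Fin 2) (Fin 2) ℂ) : Matrix (Fin 4) (Fin 4) ℝ :=
  Matrix.of fun i j =>
    let z : ℂ := M ⟨i.val / 2, by have := i.isLt; omega⟩ ⟨j.val / 2, by have := j.isLt; omega⟩
    if i.val % 2 = 0 then
      if j.val % 2 = 0 then z.re else -z.im
    else
      if j.val % 2 = 0 then z.im else z.re

-- Real form of the conjugate-linear map `v ↦ N * conj v`: each entry `x + iy` of `N`
-- becomes the block `!![x, y; y, -x]`.
def ρConj (N : Matrix (Fin 2) (Fin 2) ℂ) : Matrix (Fin 4) (Fin 4) ℝ :=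
  Matrix.of fun i j =>
    let z : ℂ := N ⟨i.val / 2, by have := i.isLt; omega⟩ ⟨j.val / 2, by have := j.isLt; omega⟩
    if i.val % 2 = 0 then
      if j.val % 2 = 0 then z.re else z.im
    else
      if j.val % 2 = 0 then z.im else -z.re

theorem ρConj_injective : Function.Injective ρConj := by
  intro M N h
  refine Matrix.ext fun i j => Complex.ext ?_ ?_
  · simpa [ρConj] using congr_fun₂ h ⟨2 * i, by omega⟩ ⟨2 * j, by omega⟩
  · simpa [ρConj, show (2 * (j : ℕ) + 1) / 2 = j by omega] using
      congr_fun₂ h ⟨2 * i, by omega⟩ ⟨2 * j + 1, by omega⟩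

theorem ρ_mul (M N : Matrix (Fin 2) (Fin 2) ℂ) : ρ (M * N) = ρ M * ρ N := by
  ext i j
  fin_cases i <;> fin_cases j <;>
    simp [ρ, mul_apply, Fin.sum_univ_four, Fin.sum_univ_two] <;> ring

theorem ρ_mul_ρConj (M N : Matrix (Fin 2) (Fin 2) ℂ) : ρ M * ρConj N = ρConj (M * N) := by
  ext i j
  fin_cases i <;> fin_cases j <;>
    simp [ρ, ρConj, mul_apply, Fin.sum_univ_four, Fin.sum_univ_two] <;> ring

theorem ρConj_mul_ρ (M N : Matrix (Fin 2) (Fin 2) ℂ) :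
    ρConj N * ρ M = ρConj (N * M.map (starRingEnd ℂ)) := by
  ext i j
  fin_cases i <;> fin_cases j <;>
    simp [ρ, ρConj, mul_apply, Fin.sum_univ_four, Fin.sum_univ_two] <;> ring

theorem J₀_eq_ρ : J₀ = ρ (scalar (Fin 2) (-Complex.I)) := by
  ext i j
  fin_cases i <;> fin_cases j <;> simp [J₀, K₁, ρ]

theorem K₁_eq_smul_J₀_add_ρConj (a b c : ℝ) :
    K₁ a b c = a • J₀ + ρConj !![0, ⟨b, c⟩; -⟨b, c⟩, 0] := by
  ext i j
  fin_cases i <;> fin_cases j <;> simp [J₀, K₁, ρConj]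

theorem commute_ρ_J₀ (M : Matrix (Fin 2) (Fin 2) ℂ) : Commute (ρ M) J₀ := by
  rw [J₀_eq_ρ, Commute, SemiconjBy, ← ρ_mul, ← ρ_mul,
    (scalar_commute _ (Commute.all _) M).eq]

theorem commute_ρ_ρConj_iff (M N : Matrix (Fin 2) (Fin 2) ℂ) :
    Commute (ρ M) (ρConj N) ↔ M * N = N * M.map (starRingEnd ℂ) := by
  rw [Commute, SemiconjBy, ρ_mul_ρConj, ρConj_mul_ρ, ρConj_injective.eq_iff]

theorem commute_ρ_K₁_iff (M : Matrix (Fin 2) (Fin 2) ℂ) (a b c : ℝ) :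
    Commute (ρ M) (K₁ a b c) ↔
      M * !![0, ⟨b, c⟩; -⟨b, c⟩, 0] = !![0, ⟨b, c⟩; -⟨b, c⟩, 0] * M.map (starRingEnd ℂ) := by
  have hJ := (commute_ρ_J₀ M).smul_right a
  rw [K₁_eq_smul_J₀_add_ρConj, ← commute_ρ_ρConj_iff]
  exact ⟨fun h => by simpa using h.sub_right hJ, hJ.add_right⟩

theorem map_fin_two {α β : Type*} (f : α → β) (a b c d : α) :
    (!![a, b; c, d]).map f = !![f a, f b; f c, f d] := by
  ext i j
  fin_cases i <;> fin_cases j <;> rfl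

theorem mul_antidiag_eq_antidiag_mul_conj_iff {w : ℂ} (hw : w ≠ 0) (z₁ z₂ z₃ z₄ : ℂ) :
    !![z₁, z₂; z₃, z₄] * !![0, w; -w, 0] =
        !![0, w; -w, 0] * (!![z₁, z₂; z₃, z₄]).map (starRingEnd ℂ) ↔
      (starRingEnd ℂ) z₂ = -z₃ ∧ (starRingEnd ℂ) z₁ = z₄ := by
  rw [map_fin_two, mul_fin_two, mul_fin_two, EmbeddingLike.apply_eq_iff_eq]
  have cancel (x y : ℂ) : x * w = w * y ↔ x = y := by rw [mul_comm w, mul_left_inj' hw]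
  have cancel_neg (x y : ℂ) : x * w = -(w * y) ↔ x = -y := by rw [← mul_neg, cancel]
  simp only [vecCons_inj, and_true, mul_zero, zero_mul, add_zero, zero_add, mul_neg, neg_mul,
    neg_eq_iff_eq_neg, neg_neg, cancel, cancel_neg]
  constructor
  · rintro ⟨-, rfl, rfl⟩
    simp
  · rintro ⟨h₂, rfl⟩
    obtain rfl : z₃ = -starRingEnd ℂ z₂ := by rw [h₂, neg_neg]
    simp

theorem complex_mk_ne_zero_of_sq_add_sq_add_sq_eq_one {a b c : ℝ}
    (hunit : a ^ 2 + b ^ 2 + c ^ 2 = 1) (ha : a ≠ 1) (ha' : a ≠ -1) : (⟨b, c⟩ : ℂ) ≠ 0 := by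
  intro h
  obtain ⟨rfl, rfl⟩ : b = 0 ∧ c = 0 := Complex.ext_iff.mp h
  rcases sq_eq_sq_iff_eq_or_eq_neg.mp (show a ^ 2 = 1 ^ 2 by linarith) with h₁ | h₁
  exacts [ha h₁, ha' h₁]

/-- For `A = ρ !![z₁, z₂; z₃, z₄]` and `C = K₁ a b c` with unit parameter vector and
`a ≠ ±1`, the matrix `A` commutes with `C` iff `conj z₂ = -z₃` and `conj z₁ = z₄`. -/
theorem real_form_commutes_with_C_iff
    (a b c : ℝ) (hunit : a ^ 2 + b ^ 2 + c ^ 2 = 1) (ha : a ≠ 1) (ha' : a ≠ -1)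
    (z₁ z₂ z₃ z₄ : ℂ) (A : Matrix (Fin 4) (Fin 4) ℝ)
    (hA : A = ρ !![z₁, z₂; z₃, z₄]) :
    A * K₁ a b c = K₁ a b c * A ↔
      (starRingEnd ℂ) z₂ = -z₃ ∧ (starRingEnd ℂ) z₁ = z₄ := by
  subst hA
  exact (commute_ρ_K₁_iff _ a b c).trans <| mul_antidiag_eq_antidiag_mul_conj_iff
    (complex_mk_ne_zero_of_sq_add_sq_add_sq_eq_one hunit ha ha') z₁ z₂ z₃ z₄
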